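/- Let Q(x) be a.e. symmetric nonnegative definite and V(x) a.e. symmetric nonnegative definite (m×m, real). For u in the form domain and f ∈ H¹(ℝ^d;ℂ) with |f| ≤ ‖u‖, the sesquilinear forms 𝔞(u,v) = Σᵢ ∫ ⟨Q∇uᵢ, ∇vᵢ⟩ + ∫ ⟨Vu, v⟩ and 𝔟(g,h) = ∫ ⟨Q∇g, ∇h⟩ satisfy 𝔞(u, |f| sign(u)) ≥ 𝔟(‖u‖, |f|), where sign(u) = u/‖u‖ on {u ≠ 0} and 0 elsewhere. -/

import Mathlib

open MeasureTheory Matrix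

/-- The Euclidean norm of a vector `v : Fin m → ℂ`. -/
noncomputable def vecNorm {m : ℕ} (v : Fin m → ℂ) : ℝ :=
  Real.sqrt (∑ j, ‖v j‖^2)

/-- The function `sign(u)` multiplied by `|f|`, i.e. `|f| u/‖u‖` on `{u ≠ 0}`
and `0` elsewhere. -/
noncomputable def signPart {d m : ℕ} (u : EuclideanSpace ℝ (Fin d) → Fin m → ℂ)
    (f : EuclideanSpace ℝ (Fin d) → ℂ) (x : EuclideanSpace ℝ (Fin d)) : Fin m → ℂ :=
  if u x = 0 then 0 else fun h => ((‖f x‖ / vecNorm (u x) : ℝ) : ℂ) * u x h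

lemma my_sum_dot {n : ℕ} {ι : Type*} [Fintype ι] (v : ι → Fin n → ℝ) (w : Fin n → ℝ) :
    (∑ i, v i) ⬝ᵥ w = ∑ i, v i ⬝ᵥ w := by
  simp only [dotProduct, Finset.sum_apply, Finset.sum_mul]
  exact Finset.sum_comm

lemma my_dot_symm {n : ℕ} (M : Matrix (Fin n) (Fin n) ℝ) (h : M.IsSymm)
    (v w : Fin n → ℝ) : v ⬝ᵥ M *ᵥ w = w ⬝ᵥ M *ᵥ v := by
  simp only [dotProduct, Matrix.mulVec, dotProduct, Finset.mul_sum]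
  rw [Finset.sum_comm]
  refine Finset.sum_congr rfl fun i _ => Finset.sum_congr rfl fun j _ => ?_
  rw [h.apply i j]; ring

lemma my_key {n : ℕ} {ι : Type*} [Fintype ι] (M : Matrix (Fin n) (Fin n) ℝ)
    (hs : M.IsSymm) (hp : ∀ ξ, 0 ≤ ξ ⬝ᵥ M *ᵥ ξ) (c : ι → ℝ) (v : ι → Fin n → ℝ)
    (hc : ∑ k, c k ^ 2 = 1) :
    (∑ k, c k • v k) ⬝ᵥ M *ᵥ (∑ k, c k • v k) ≤ ∑ k, v k ⬝ᵥ M *ᵥ v k := by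
  set g : Fin n → ℝ := ∑ k, c k • v k with hg
  have hcross : ∑ k, c k * (v k ⬝ᵥ M *ᵥ g) = g ⬝ᵥ M *ᵥ g := by
    rw [hg, my_sum_dot]
    refine Finset.sum_congr rfl fun k _ => ?_
    rw [smul_dotProduct]; rfl
  have h0 : 0 ≤ ∑ k, ((v k - c k • g) ⬝ᵥ M *ᵥ (v k - c k • g)) :=
    Finset.sum_nonneg fun k _ => hp _
  have hexp : ∀ k, (v k - c k • g) ⬝ᵥ M *ᵥ (v k - c k • g)
      = v k ⬝ᵥ M *ᵥ v k - 2 * (c k * (v k ⬝ᵥ M *ᵥ g)) + c k ^ 2 * (g ⬝ᵥ M *ᵥ g) := by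
    intro k
    have h1 : (c k • g) ⬝ᵥ M *ᵥ v k = v k ⬝ᵥ M *ᵥ (c k • g) := my_dot_symm M hs _ _
    rw [sub_dotProduct, Matrix.mulVec_sub, dotProduct_sub, dotProduct_sub, h1,
      Matrix.mulVec_smul, dotProduct_smul, dotProduct_smul, smul_dotProduct]
    simp only [smul_eq_mul]
    ring
  rw [Finset.sum_congr rfl fun k _ => hexp k] at h0
  simp only [Finset.sum_add_distrib, Finset.sum_sub_distrib, ← Finset.sum_mul,
    ← Finset.mul_sum, hcross, hc] at h0
  nlinarith [h0]

lemma my_pointwise {d m : ℕ} (Qx : Matrix (Fin d) (Fin d) ℝ) (Vx : Matrix (Fin m) (Fin m) ℝ)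
    (ux : Fin m → ℂ) (gux : Fin m → Fin d → ℂ) (fa nn : ℝ) (gfx gnx : Fin d → ℝ)
    (gwx : Fin m → Fin d → ℂ) (sx : Fin m → ℂ)
    (hQs : Qx.IsSymm) (hQp : ∀ ξ, 0 ≤ ξ ⬝ᵥ Qx *ᵥ ξ)
    (hVp : ∀ ζ : Fin m → ℝ, 0 ≤ ζ ⬝ᵥ Vx *ᵥ ζ)
    (hfa0 : 0 ≤ fa) (hfa : fa ≤ nn) (hn : 0 < nn)
    (hn2 : nn ^ 2 = ∑ j, ‖ux j‖ ^ 2)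
    (hgn : ∀ i, gnx i = nn⁻¹ * ∑ j, ((starRingEnd ℂ) (ux j) * gux j i).re)
    (hgw : ∀ j i, gwx j i = ((fa / nn : ℝ) : ℂ) * gux j i
        + (ux j / (nn : ℂ)) * (((gfx i : ℝ) : ℂ) - ((fa / nn : ℝ) : ℂ) * ((gnx i : ℝ) : ℂ)))
    (hs : ∀ h, sx h = ((fa / nn : ℝ) : ℂ) * ux h) :
    gnx ⬝ᵥ Qx *ᵥ gfx ≤
      (∑ j, ((fun i => (gux j i).re) ⬝ᵥ Qx *ᵥ (fun k => (gwx j k).re)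
           + (fun i => (gux j i).im) ⬝ᵥ Qx *ᵥ (fun k => (gwx j k).im)))
      + ∑ h, ∑ k, Vx h k * (ux k * (starRingEnd ℂ) (sx h)).re := by
  set c : ℝ := fa / nn with hc
  have hc0 : 0 ≤ c := div_nonneg hfa0 hn.le
  set vr : Fin m → Fin d → ℝ := fun j i => (gux j i).re with hvr
  set vi : Fin m → Fin d → ℝ := fun j i => (gux j i).im with hvi
  set r : Fin d → ℝ := fun i => gfx i - c * gnx i with hr
  -- coefficient vector over Fin m ⊕ Fin m
  set cc : Fin m ⊕ Fin m → ℝ := Sum.elim (fun j => (ux j).re / nn) (fun j => (ux j).im / nn)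
    with hcc
  set vv : Fin m ⊕ Fin m → Fin d → ℝ := Sum.elim vr vi with hvv
  have hgnsum : gnx = ∑ k, cc k • vv k := by
    funext i
    rw [Finset.sum_apply, Fintype.sum_sum_type]
    simp only [hcc, hvv, Sum.elim_inl, Sum.elim_inr, Pi.smul_apply, smul_eq_mul, hvr, hvi]
    rw [hgn i, Finset.mul_sum, ← Finset.sum_add_distrib]
    refine Finset.sum_congr rfl fun j _ => ?_
    simp only [Complex.mul_re, Complex.conj_re, Complex.conj_im]
    field_simp
    try ring
  have hcc2 : ∑ k, cc k ^ 2 = 1 := by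
    rw [Fintype.sum_sum_type]
    simp only [hcc, Sum.elim_inl, Sum.elim_inr, div_pow]
    rw [← Finset.sum_add_distrib]
    have e : ∀ j : Fin m, (ux j).re ^ 2 / nn ^ 2 + (ux j).im ^ 2 / nn ^ 2
        = ‖ux j‖ ^ 2 / nn ^ 2 := by
      intro j
      rw [← add_div, Complex.sq_norm, Complex.normSq_apply]
      ring_nf
    rw [Finset.sum_congr rfl fun j _ => e j, ← Finset.sum_div, ← hn2,
      div_self (by positivity)]
  -- real and imaginary parts of gw
  have hgwre : ∀ j, (fun k => (gwx j k).re) = c • vr j + ((ux j).re / nn) • r := by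
    intro j; funext k
    rw [hgw j k]
    simp only [Pi.add_apply, Pi.smul_apply, smul_eq_mul, hvr, hr, Complex.add_re,
      Complex.mul_re, Complex.ofReal_re, Complex.ofReal_im, Complex.sub_re, Complex.sub_im,
      Complex.div_re, Complex.div_im, Complex.mul_im, Complex.normSq_ofReal,
      Complex.ofReal_mul]
    field_simp
    ring
  have hgwim : ∀ j, (fun k => (gwx j k).im) = c • vi j + ((ux j).im / nn) • r := by
    intro j; funext k
    rw [hgw j k]
    simp only [Pi.add_apply, Pi.smul_apply, smul_eq_mul, hvi, hr, Complex.add_im,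
      Complex.mul_re, Complex.ofReal_re, Complex.ofReal_im, Complex.sub_re, Complex.sub_im,
      Complex.div_re, Complex.div_im, Complex.mul_im, Complex.normSq_ofReal,
      Complex.ofReal_mul]
    field_simp
    ring
  -- the Q sum
  set S : ℝ := ∑ j, (vr j ⬝ᵥ Qx *ᵥ vr j + vi j ⬝ᵥ Qx *ᵥ vi j) with hS
  have hQsum : (∑ j, ((fun i => (gux j i).re) ⬝ᵥ Qx *ᵥ (fun k => (gwx j k).re)
           + (fun i => (gux j i).im) ⬝ᵥ Qx *ᵥ (fun k => (gwx j k).im)))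
      = c * S + gnx ⬝ᵥ Qx *ᵥ r := by
    have step : ∀ j, (fun i => (gux j i).re) ⬝ᵥ Qx *ᵥ (fun k => (gwx j k).re)
           + (fun i => (gux j i).im) ⬝ᵥ Qx *ᵥ (fun k => (gwx j k).im)
        = c * (vr j ⬝ᵥ Qx *ᵥ vr j + vi j ⬝ᵥ Qx *ᵥ vi j)
          + ((ux j).re / nn * (vr j ⬝ᵥ Qx *ᵥ r) + (ux j).im / nn * (vi j ⬝ᵥ Qx *ᵥ r)) := by
      intro j
      have e1 : (fun i => (gux j i).re) = vr j := rfl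
      have e2 : (fun i => (gux j i).im) = vi j := rfl
      rw [e1, e2, hgwre j, hgwim j,
        Matrix.mulVec_add, dotProduct_add, Matrix.mulVec_smul, dotProduct_smul,
        Matrix.mulVec_smul, dotProduct_smul, Matrix.mulVec_add, dotProduct_add,
        Matrix.mulVec_smul, dotProduct_smul, Matrix.mulVec_smul, dotProduct_smul]
      simp only [smul_eq_mul]
      ring
    rw [Finset.sum_congr rfl fun j _ => step j, Finset.sum_add_distrib, ← Finset.mul_sum]
    congr 1
    have : gnx ⬝ᵥ Qx *ᵥ r = ∑ k, cc k * (vv k ⬝ᵥ Qx *ᵥ r) := by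
      rw [hgnsum, my_sum_dot]
      refine Finset.sum_congr rfl fun k _ => ?_
      rw [smul_dotProduct]; rfl
    rw [this, Fintype.sum_sum_type]
    simp only [hcc, hvv, Sum.elim_inl, Sum.elim_inr]
    rw [Finset.sum_add_distrib]
  -- the V term
  have hVterm : 0 ≤ ∑ h, ∑ k, Vx h k * (ux k * (starRingEnd ℂ) (sx h)).re := by
    have key : ∑ h, ∑ k, Vx h k * (ux k * (starRingEnd ℂ) (sx h)).re
        = c * ((fun h => (ux h).re) ⬝ᵥ Vx *ᵥ (fun h => (ux h).re))
          + c * ((fun h => (ux h).im) ⬝ᵥ Vx *ᵥ (fun h => (ux h).im)) := by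
      simp only [dotProduct, Matrix.mulVec, dotProduct, Finset.mul_sum]
      rw [← Finset.sum_add_distrib]
      refine Finset.sum_congr rfl fun h _ => ?_
      rw [← Finset.sum_add_distrib]
      refine Finset.sum_congr rfl fun k _ => ?_
      rw [hs h, _root_.map_mul, Complex.conj_ofReal]
      simp only [Complex.mul_re, Complex.mul_im, Complex.conj_re, Complex.conj_im,
        Complex.ofReal_re, Complex.ofReal_im]
      ring
    rw [key]
    have h1 := hVp (fun h => (ux h).re)
    have h2 := hVp (fun h => (ux h).im)
    have := mul_nonneg hc0 h1
    have := mul_nonneg hc0 h2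
    linarith
  -- key inequality
  have hkey : gnx ⬝ᵥ Qx *ᵥ gnx ≤ S := by
    have e : ∑ k : Fin m ⊕ Fin m, vv k ⬝ᵥ Qx *ᵥ vv k = S := by
      rw [Fintype.sum_sum_type]
      simp only [hvv, Sum.elim_inl, Sum.elim_inr, hS, Finset.sum_add_distrib]
    rw [hgnsum, ← e]
    exact my_key Qx hQs hQp cc vv hcc2
  -- LHS decomposition
  have hgf : gfx = r + c • gnx := by
    funext i; simp only [Pi.add_apply, Pi.smul_apply, smul_eq_mul, hr]; ring
  have hLHS : gnx ⬝ᵥ Qx *ᵥ gfx = gnx ⬝ᵥ Qx *ᵥ r + c * (gnx ⬝ᵥ Qx *ᵥ gnx) := by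
    rw [hgf, Matrix.mulVec_add, dotProduct_add, Matrix.mulVec_smul, dotProduct_smul]
    rfl
  rw [hLHS, hQsum]
  nlinarith [mul_le_mul_of_nonneg_left hkey hc0]

/-- The form inequality `𝔞(u, |f| sign(u)) ≥ 𝔟(‖u‖, |f|)`, for a.e. nonnegative
definite symmetric `Q` and nonnegative definite symmetric `V`, `|f| ≤ ‖u‖`, given
chain rule formulas for the (weak) gradients `gn = ∇‖u‖`, `gf = ∇|f|`,
`gw j = ∇(|f| sign(u))_j`, `gu j = ∇u_j`, and integrability of both integrands. -/
theorem stmt_14 (d m : ℕ)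
    (Q : EuclideanSpace ℝ (Fin d) → Matrix (Fin d) (Fin d) ℝ)
    (V : EuclideanSpace ℝ (Fin d) → Matrix (Fin m) (Fin m) ℝ)
    (u : EuclideanSpace ℝ (Fin d) → Fin m → ℂ)
    (gu : Fin m → EuclideanSpace ℝ (Fin d) → Fin d → ℂ)
    (f : EuclideanSpace ℝ (Fin d) → ℂ)
    (gf : EuclideanSpace ℝ (Fin d) → Fin d → ℝ)
    (gn : EuclideanSpace ℝ (Fin d) → Fin d → ℝ)
    (gw : Fin m → EuclideanSpace ℝ (Fin d) → Fin d → ℂ)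
    (hQ : ∀ᵐ x ∂(volume : Measure (EuclideanSpace ℝ (Fin d))),
      (Q x).IsSymm ∧ ∀ ξ : Fin d → ℝ, 0 ≤ ξ ⬝ᵥ (Q x).mulVec ξ)
    (hV : ∀ᵐ x ∂(volume : Measure (EuclideanSpace ℝ (Fin d))),
      (V x).IsSymm ∧ ∀ ζ : Fin m → ℝ, 0 ≤ ζ ⬝ᵥ (V x).mulVec ζ)
    (hfu : ∀ᵐ x ∂(volume : Measure (EuclideanSpace ℝ (Fin d))),
      ‖f x‖ ≤ vecNorm (u x))
    (hgn : ∀ᵐ x ∂(volume : Measure (EuclideanSpace ℝ (Fin d))),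
      (u x ≠ 0 → gn x = fun i => (vecNorm (u x))⁻¹ *
          ∑ j, ((starRingEnd ℂ) (u x j) * gu j x i).re) ∧
      (u x = 0 → gn x = 0))
    (hgw : ∀ᵐ x ∂(volume : Measure (EuclideanSpace ℝ (Fin d))),
      (u x ≠ 0 → ∀ j, gw j x = fun i =>
          ((‖f x‖ / vecNorm (u x) : ℝ) : ℂ) * gu j x i
          + (u x j / (vecNorm (u x) : ℂ)) *
              (((gf x i : ℝ) : ℂ)
                - ((‖f x‖ / vecNorm (u x) : ℝ) : ℂ) * (gn x i : ℂ))) ∧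
      (u x = 0 → ∀ j, gw j x = 0))
    (hIntA : Integrable (fun x =>
      (∑ j, ((fun i => (gu j x i).re) ⬝ᵥ (Q x).mulVec (fun k => (gw j x k).re)
           + (fun i => (gu j x i).im) ⬝ᵥ (Q x).mulVec (fun k => (gw j x k).im)))
      + ∑ h, ∑ k, V x h k * (u x k * (starRingEnd ℂ) (signPart u f x h)).re) volume)
    (hIntB : Integrable (fun x => gn x ⬝ᵥ (Q x).mulVec (gf x)) volume) :
    (∫ x, gn x ⬝ᵥ (Q x).mulVec (gf x)) ≤
      ∫ x,
        (∑ j, ((fun i => (gu j x i).re) ⬝ᵥ (Q x).mulVec (fun k => (gw j x k).re)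
             + (fun i => (gu j x i).im) ⬝ᵥ (Q x).mulVec (fun k => (gw j x k).im)))
        + ∑ h, ∑ k, V x h k * (u x k * (starRingEnd ℂ) (signPart u f x h)).re := by
  apply integral_mono_ae hIntB hIntA
  filter_upwards [hQ, hV, hfu, hgn, hgw] with x hQx hVx hfux hgnx hgwx
  by_cases hu : u x = 0
  · have h1 := hgnx.2 hu
    have h2 := hgwx.2 hu
    simp only [h1, h2, signPart, hu, if_pos, Pi.zero_apply, Complex.zero_re, Complex.zero_im,
      zero_dotProduct, map_zero, mul_zero, Finset.sum_const_zero, add_zero]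
    simp only [show (fun _ : Fin d => (0:ℝ)) = 0 from rfl, Matrix.mulVec_zero,
      dotProduct_zero, add_zero, Finset.sum_const_zero, le_refl]
  · have hsumnn : (0:ℝ) ≤ ∑ j, ‖u x j‖ ^ 2 :=
      Finset.sum_nonneg fun j _ => by positivity
    have hn2' : vecNorm (u x) ^ 2 = ∑ j, ‖u x j‖ ^ 2 := by
      rw [vecNorm]; exact Real.sq_sqrt hsumnn
    have hnpos : 0 < vecNorm (u x) := by
      rw [vecNorm]
      apply Real.sqrt_pos.mpr
      obtain ⟨j, hj⟩ := Function.ne_iff.mp hu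
      refine Finset.sum_pos' (fun i _ => by positivity) ⟨j, Finset.mem_univ j, ?_⟩
      have : ‖u x j‖ ≠ 0 := by
        simpa using hj
      positivity
    exact my_pointwise (Q x) (V x) (u x) (fun j => gu j x) (‖f x‖)
      (vecNorm (u x)) (gf x) (gn x) (fun j => gw j x) (signPart u f x)
      hQx.1 hQx.2 hVx.2 (norm_nonneg _) hfux hnpos hn2'
      (fun i => congrFun (hgnx.1 hu) i) (fun j i => congrFun (hgwx.1 hu j) i)
      (fun h => by simp [signPart, hu])
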